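/- arXiv:0911.1726 — 5 statements merged into one kernel-verified Lean document; each statement's English description precedes it below -/
import Mathlib

section
/- Let J ⊂ ℝ be an open interval and let u ∈ H^{3/2}(J). Then |u|²_{H^{3/2}(J)} ≤ (1/8)·|u'|²_{H^{1/2}(J)}. -/
open MeasureTheory Set Filter Topology ENNReal

noncomputable section

/-- Squared Gagliardo `H^{1/2}` seminorm of `g` over the set `s ⊆ ℝ`. -/
def halfSemi (g : ℝ → ℝ) (s : Set ℝ) : ℝ≥0∞ :=
  ∫⁻ p in s ×ˢ s, ENNReal.ofReal ((g p.1 - g p.2) ^ 2 / (p.1 - p.2) ^ 2)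

/-- `f ∈ H²_loc(ℝ)`, encoded through a concrete derivative `f'` and a second
derivative `f''` which is the (locally integrable) a.e. derivative of `f'`. -/
def IsH2Profile (f f' f'' : ℝ → ℝ) : Prop :=
  (∀ t : ℝ, HasDerivAt f (f' t) t) ∧
  (∀ s t : ℝ, IntervalIntegrable f'' volume s t) ∧
  (∀ s t : ℝ, f' t - f' s = ∫ x in s..t, f'' x)

/-- `f ∈ H²_loc` on the set `s`. -/
def IsH2ProfileOn (s : Set ℝ) (f f' f'' : ℝ → ℝ) : Prop :=
  (∀ t ∈ s, HasDerivAt f (f' t) t) ∧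
  (∀ r ∈ s, ∀ t ∈ s, IntervalIntegrable f'' volume r t ∧ f' t - f' r = ∫ x in r..t, f'' x)

/-- `f` locally absolutely continuous with derivative `f'` (the `H^{3/2}_loc` model:
`f'` is the a.e. derivative of `f`). -/
def IsACProfile (f f' : ℝ → ℝ) : Prop :=
  (∀ s t : ℝ, IntervalIntegrable f' volume s t) ∧
  (∀ s t : ℝ, f t - f s = ∫ x in s..t, f' x)

/-- The optimal interior transition energy `m`. -/
def mConst (W : ℝ → ℝ) (a b : ℝ) : ℝ :=
  sInf {e : ℝ | ∃ (f f' f'' : ℝ → ℝ) (R : ℝ), 0 < R ∧ IsH2Profile f f' f'' ∧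
    (∀ t : ℝ, R ≤ t → f (-t) = a ∧ f t = b) ∧
    (∫⁻ t in Ioo (-R) R, ENNReal.ofReal (W (f t) + f'' t ^ 2)) ≠ ⊤ ∧
    e = (∫⁻ t in Ioo (-R) R, ENNReal.ofReal (W (f t) + f'' t ^ 2)).toReal}

/-- The optimal boundary/interior interaction energy `σ(z, ξ)`. -/
def sigmaConst (W : ℝ → ℝ) (z ξ : ℝ) : ℝ :=
  sInf {e : ℝ | ∃ (f f' f'' : ℝ → ℝ) (R : ℝ), 0 < R ∧
    IsH2ProfileOn (Ioi 0) f f' f'' ∧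
    ContinuousWithinAt f (Ici 0) 0 ∧ f 0 = ξ ∧
    (∀ t : ℝ, R ≤ t → f t = z) ∧
    (∫⁻ t in Ioo 0 R, ENNReal.ofReal (W (f t) + f'' t ^ 2)) ≠ ⊤ ∧
    e = (∫⁻ t in Ioo 0 R, ENNReal.ofReal (W (f t) + f'' t ^ 2)).toReal}

/-- Admissible class for the lower boundary-transition constant `c̲`. -/
def cLowSet (V : ℝ → ℝ) (α β : ℝ) : Set ℝ :=
  {e : ℝ | ∃ (f f' : ℝ → ℝ) (R : ℝ), 0 < R ∧ IsACProfile f f' ∧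
    halfSemi f' univ ≠ ⊤ ∧
    (∀ t : ℝ, R ≤ t → f (-t) = α ∧ f t = β) ∧
    e = (1 / 8) * (halfSemi f' (Ioo (-R) R)).toReal + ∫ x in Ioo (-R) R, V (f x)}

/-- The lower boundary-transition constant `c̲`. -/
def cLow (V : ℝ → ℝ) (α β : ℝ) : ℝ := sInf (cLowSet V α β)

/-- Admissible class for the upper boundary-transition constant `c̄`. -/
def cUpSet (V : ℝ → ℝ) (α β : ℝ) : Set ℝ :=
  {e : ℝ | ∃ (f f' : ℝ → ℝ) (R : ℝ), 0 < R ∧ IsACProfile f f' ∧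
    halfSemi f' univ ≠ ⊤ ∧
    (∀ t : ℝ, R ≤ t → f (-t) = α ∧ f t = β) ∧
    e = (7 / 16) * (halfSemi f' univ).toReal + ∫ x, V (f x)}

/-- The upper boundary-transition constant `c̄`. -/
def cUp (V : ℝ → ℝ) (α β : ℝ) : ℝ := sInf (cUpSet V α β)

/-- Hypotheses (H^W) on the interior double-well potential. -/
def HypW (W : ℝ → ℝ) (a b : ℝ) : Prop :=
  Continuous W ∧ (∀ z, 0 ≤ W z) ∧ a < b ∧ (∀ z, W z = 0 ↔ z = a ∨ z = b) ∧
  ∃ C > (0:ℝ), ∀ z : ℝ, C * |z| ^ 2 - 1 / C ≤ W z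

/-- Hypotheses (H^V) on the boundary double-well potential. -/
def HypV (V : ℝ → ℝ) (α β : ℝ) : Prop :=
  Continuous V ∧ (∀ z, 0 ≤ V z) ∧ α < β ∧ (∀ z, V z = 0 ↔ z = α ∨ z = β) ∧
  (∃ C > (0:ℝ), ∀ z : ℝ, C * |z| ^ 2 - 1 / C ≤ V z) ∧
  ∃ C > (0:ℝ), ∃ ρ > (0:ℝ), ∀ z : ℝ,
    z ∈ Ioo (α - ρ) (α + ρ) ∪ Ioo (β - ρ) (β + ρ) →
      (1 / C) * min |z - α| |z - β| ^ 2 ≤ V z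


/-- The one-dimensional interior energy `F_ε(u; I)` on the `H²` class
(written with lower integrals of the nonnegative integrands). -/
def F1D (W : ℝ → ℝ) (ε : ℝ) (u u'' : ℝ → ℝ) (I : Set ℝ) : ℝ≥0∞ :=
  ENNReal.ofReal (ε ^ 3) * ∫⁻ x in I, ENNReal.ofReal (u'' x ^ 2)
  + ENNReal.ofReal (1 / ε) * ∫⁻ x in I, ENNReal.ofReal (W (u x))

/-- The one-dimensional boundary energy `G_ε(v; J)` on the `H^{3/2}` class. -/
def G1D (V : ℝ → ℝ) (ε lam : ℝ) (v v' : ℝ → ℝ) (J : Set ℝ) : ℝ≥0∞ :=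
  ENNReal.ofReal (ε ^ 3 / 8) * halfSemi v' J
  + ENNReal.ofReal lam * ∫⁻ x in J, ENNReal.ofReal (V (v x))

/-- `u ∈ H²(I)`: `u` is differentiable on `I` with derivative `u'`, and `u'` is
absolutely continuous on `I` with a.e. derivative `u''`. -/
def IsH2On (I : Set ℝ) (u u' u'' : ℝ → ℝ) : Prop :=
  (∀ x ∈ I, HasDerivAt u (u' x) x) ∧
  (∀ s ∈ I, ∀ t ∈ I, IntervalIntegrable u'' volume s t ∧
    u' t - u' s = ∫ x in s..t, u'' x)

/-- `v ∈ H^{3/2}(J)`: `v` is absolutely continuous on `J` with a.e. derivative `v'`,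
and `v'` has finite `H^{1/2}(J)` seminorm. -/
def IsH32On (J : Set ℝ) (v v' : ℝ → ℝ) : Prop :=
  (∀ s ∈ J, ∀ t ∈ J, IntervalIntegrable v' volume s t ∧
    v t - v s = ∫ x in s..t, v' x) ∧
  halfSemi v' J ≠ ⊤

/-- `u ∈ BV(I; {c₀, c₁})`: `u` takes only the two values `c₀, c₁` on `I` and is
locally constant on `I` off a finite set. -/
def BVtwo (I : Set ℝ) (c₀ c₁ : ℝ) (u : ℝ → ℝ) : Prop :=
  (∀ x ∈ I, u x = c₀ ∨ u x = c₁) ∧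
  ∃ S : Finset ℝ, ∀ x ∈ I, x ∉ S → ∃ δ > 0, ∀ y ∈ I, |y - x| < δ → u y = u x

/-!
Write `x = m + h`, `y = m - h`. The second difference `u (m + h) - 2 u m + u (m - h)` is
`∫₀ʰ (u' (m + t) - u' (m - t)) dt`, so by Cauchy–Schwarz its square is at most
`h ∫₀ʰ (u' (m + t) - u' (m - t))² dt`. Dividing by `(2h)⁴`, integrating over `h > 0` and
exchanging the order of integration with `∫ₜ^∞ dh / (16 h³) = 1 / (32 t²)` gives
`(1/8) ∫∫ (u' (m + t) - u' (m - t))² / (2t)² dt dm`, which is `1/8` of `|u'|²_{H^{1/2}}` written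
in the same coordinates.
-/

theorem sq_lintegral_le_measure_univ_mul {α : Type*} [MeasurableSpace α] (μ : Measure α)
    {f : α → ℝ≥0∞} (hf : AEMeasurable f μ) :
    (∫⁻ a, f a ∂μ) ^ 2 ≤ μ univ * ∫⁻ a, f a ^ 2 ∂μ := by
  have holder := lintegral_mul_norm_pow_le (hf.pow_const 2) aemeasurable_const
    (μ := μ) (g := fun _ => (1 : ℝ≥0∞)) (p := 1 / 2) (q := 1 / 2) (by norm_num) (by norm_num)
    (by norm_num)
  have sq_rpow_half (x : ℝ≥0∞) : (x ^ (1 / 2 : ℝ)) ^ 2 = x := by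
    rw [← ENNReal.rpow_natCast, ← ENNReal.rpow_mul]; norm_num
  have rpow_half_sq (x : ℝ≥0∞) : (x ^ 2) ^ (1 / 2 : ℝ) = x := by
    rw [← ENNReal.rpow_natCast, ← ENNReal.rpow_mul]; norm_num
  simp only [rpow_half_sq, ENNReal.one_rpow, mul_one, lintegral_const, one_mul] at holder
  calc (∫⁻ a, f a ∂μ) ^ 2
      ≤ ((∫⁻ a, f a ^ 2 ∂μ) ^ (1 / 2 : ℝ) * μ univ ^ (1 / 2 : ℝ)) ^ 2 := by gcongr
    _ = μ univ * ∫⁻ a, f a ^ 2 ∂μ := by rw [mul_pow, sq_rpow_half, sq_rpow_half, mul_comm]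

theorem ofReal_sq_integral_le {α : Type*} [MeasurableSpace α] (μ : Measure α)
    {f : α → ℝ} (hf : AEMeasurable f μ) :
    ENNReal.ofReal ((∫ a, f a ∂μ) ^ 2) ≤ μ univ * ∫⁻ a, ENNReal.ofReal (f a ^ 2) ∂μ := by
  have ofReal_sq (x : ℝ) : ENNReal.ofReal (x ^ 2) = ‖x‖ₑ ^ 2 := by
    rw [Real.enorm_eq_ofReal_abs, ← ENNReal.ofReal_pow (abs_nonneg x), sq_abs]
  simp only [ofReal_sq]
  calc ‖∫ a, f a ∂μ‖ₑ ^ 2 ≤ (∫⁻ a, ‖f a‖ₑ ∂μ) ^ 2 := by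
        gcongr; exact enorm_integral_le_lintegral_enorm f
    _ ≤ μ univ * ∫⁻ a, ‖f a‖ₑ ^ 2 ∂μ := sq_lintegral_le_measure_univ_mul μ hf.enorm

theorem lintegral_Ici_ofReal_inv_mul_pow_three {a t : ℝ} (ha : 0 < a) (ht : 0 < t) :
    ∫⁻ h in Ici t, ENNReal.ofReal (a * h ^ 3)⁻¹ = ENNReal.ofReal (2 * a * t ^ 2)⁻¹ := by
  have hrpow : ∀ h ∈ Ioi t, (a * h ^ 3)⁻¹ = a⁻¹ * h ^ (-3 : ℝ) := fun h hh => by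
    rw [Real.rpow_neg (ht.trans hh).le, Real.rpow_ofNat, mul_inv]
  rw [← setLIntegral_congr Ioi_ae_eq_Ici,
    setLIntegral_congr_fun measurableSet_Ioi fun h hh => by rw [hrpow h hh],
    ← ofReal_integral_eq_lintegral_ofReal
      ((integrableOn_Ioi_rpow_of_lt (by norm_num) ht).const_mul _)
      (ae_restrict_of_forall_mem measurableSet_Ioi fun h hh =>
        mul_nonneg (inv_nonneg.mpr ha.le) (Real.rpow_nonneg (ht.trans hh).le _)),
    integral_const_mul, integral_Ioi_rpow_of_lt (by norm_num) ht]
  congr 1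
  rw [show (-3 : ℝ) + 1 = -2 by norm_num, Real.rpow_neg ht.le, Real.rpow_ofNat]
  field_simp

theorem lintegral_Ioi_mul_lintegral_Ioc {c ψ : ℝ → ℝ≥0∞} (hc : Measurable c)
    (hψ : Measurable ψ) :
    ∫⁻ h in Ioi 0, c h * ∫⁻ t in Ioc 0 h, ψ t = ∫⁻ t in Ioi 0, ψ t * ∫⁻ h in Ici t, c h := by
  set k : ℝ × ℝ → ℝ≥0∞ := {q | q.2 ≤ q.1}.indicator fun q => c q.1 * ψ q.2
  have hk : Measurable k := ((hc.comp measurable_fst).mul (hψ.comp measurable_snd)).indicator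
    (measurableSet_le measurable_snd measurable_fst)
  have inner_t (h : ℝ) : c h * ∫⁻ t in Ioc 0 h, ψ t = ∫⁻ t in Ioi 0, k (h, t) := by
    rw [← lintegral_const_mul _ hψ, ← Iic_inter_Ioi, ← Measure.restrict_restrict measurableSet_Iic,
      ← lintegral_indicator measurableSet_Iic]
    rfl
  have inner_h (t : ℝ) (ht : t ∈ Ioi 0) : ∫⁻ h in Ioi 0, k (h, t) = ψ t * ∫⁻ h in Ici t, c h := by
    rw [mul_comm, ← lintegral_mul_const _ hc, ← inter_eq_left.mpr (Ici_subset_Ioi.mpr ht),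
      ← Measure.restrict_restrict measurableSet_Ici, ← lintegral_indicator measurableSet_Ici]
    rfl
  calc ∫⁻ h in Ioi 0, c h * ∫⁻ t in Ioc 0 h, ψ t
      = ∫⁻ h in Ioi 0, ∫⁻ t in Ioi 0, k (h, t) := by simp only [inner_t]
    _ = ∫⁻ t in Ioi 0, ∫⁻ h in Ioi 0, k (h, t) := lintegral_lintegral_swap hk.aemeasurable
    _ = ∫⁻ t in Ioi 0, ψ t * ∫⁻ h in Ici t, c h := setLIntegral_congr_fun measurableSet_Ioi inner_h

theorem lintegral_eq_two_mul_lintegral_comp_add_sub (f : ℝ × ℝ → ℝ≥0∞) :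
    ∫⁻ p, f p = 2 * ∫⁻ q : ℝ × ℝ, f (q.1 + q.2, q.1 - q.2) := by
  set L : ℝ × ℝ →ₗ[ℝ] ℝ × ℝ :=
    (LinearMap.fst ℝ ℝ ℝ + LinearMap.snd ℝ ℝ ℝ).prod (LinearMap.fst ℝ ℝ ℝ - LinearMap.snd ℝ ℝ ℝ)
  have hL_apply (q : ℝ × ℝ) : L q = (q.1 + q.2, q.1 - q.2) := rfl
  have hdet : LinearMap.det L = -2 := by
    rw [← LinearMap.det_toMatrix (Module.Basis.finTwoProd ℝ), Matrix.det_fin_two]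
    norm_num [L, LinearMap.toMatrix_apply]
  have hL : MeasurableEmbedding L := by
    refine (LinearMap.isClosedEmbedding_of_injective ?_).measurableEmbedding
    refine LinearMap.ker_eq_bot.mpr fun p q hpq => ?_
    simp only [hL_apply, Prod.mk.injEq] at hpq
    ext <;> linarith [hpq.1, hpq.2]
  have hmap : Measure.map L volume = (2 : ℝ≥0∞)⁻¹ • volume := by
    rw [Measure.map_linearMap_addHaar_eq_smul_addHaar volume (by rw [hdet]; norm_num), hdet,
      abs_inv, abs_neg, abs_two, ENNReal.ofReal_inv_of_pos two_pos, ENNReal.ofReal_ofNat]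
  have hchange := hL.lintegral_map (μ := volume) f
  simp only [hmap, lintegral_smul_measure, hL_apply] at hchange
  rw [← hchange, smul_eq_mul, ← mul_assoc, ENNReal.mul_inv_cancel two_ne_zero ofNat_ne_top,
    one_mul]

theorem lintegral_prod_eq_two_mul_setLIntegral_Ioi {α : Type*} [MeasurableSpace α]
    (μ : Measure α) [SFinite μ] {k : α × ℝ → ℝ≥0∞} (hk : ∀ q, k (q.1, -q.2) = k q) :
    ∫⁻ q, k q ∂μ.prod volume = 2 * ∫⁻ q in univ ×ˢ Ioi 0, k q ∂μ.prod volume := by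
  set e : α × ℝ ≃ᵐ α × ℝ := (MeasurableEquiv.refl α).prodCongr (MeasurableEquiv.neg ℝ)
  have he_apply (q : α × ℝ) : e q = (q.1, -q.2) := rfl
  have he : MeasurePreserving e (μ.prod volume) (μ.prod volume) :=
    (MeasurePreserving.id μ).prod (Measure.measurePreserving_neg volume)
  have hcompl : (univ ×ˢ Ioi (0 : ℝ))ᶜ = (univ ×ˢ Iic 0 : Set (α × ℝ)) := by ext q; simp
  have hpre : e ⁻¹' (univ ×ˢ Ioi 0) = (univ ×ˢ Iio 0 : Set (α × ℝ)) := by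
    ext q; simp [he_apply]
  rw [← lintegral_add_compl k (MeasurableSet.univ.prod measurableSet_Ioi), hcompl,
    ← setLIntegral_congr (Measure.set_prod_ae_eq (μ := μ) (ae_eq_refl univ)
      (Iio_ae_eq_Iic (a := (0 : ℝ)))), ← hpre,
    ← he.setLIntegral_comp_preimage_emb e.measurableEmbedding k]
  simp only [he_apply, hk, two_mul]

theorem setLIntegral_prod_self_eq_four_mul {s : Set ℝ} (hs : MeasurableSet s)
    {f : ℝ × ℝ → ℝ≥0∞} (hf : ∀ a b, f (a, b) = f (b, a)) :
    ∫⁻ p in s ×ˢ s, f p =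
      4 * ∫⁻ q in univ ×ˢ Ioi 0, (s ×ˢ s).indicator f (q.1 + q.2, q.1 - q.2) := by
  have hsymm : ∀ q : ℝ × ℝ, (s ×ˢ s).indicator f (q.1 + -q.2, q.1 - -q.2) =
      (s ×ˢ s).indicator f (q.1 + q.2, q.1 - q.2) := fun q => by
    rw [← sub_eq_add_neg, sub_neg_eq_add]
    by_cases hq : (q.1 + q.2, q.1 - q.2) ∈ s ×ˢ s
    · rw [indicator_of_mem hq, indicator_of_mem (show (q.1 - q.2, q.1 + q.2) ∈ s ×ˢ s from
        ⟨hq.2, hq.1⟩), hf]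
    · rw [indicator_of_notMem hq, indicator_of_notMem fun h => hq ⟨h.2, h.1⟩]
  rw [← lintegral_indicator (hs.prod hs), lintegral_eq_two_mul_lintegral_comp_add_sub,
    Measure.volume_eq_prod, lintegral_prod_eq_two_mul_setLIntegral_Ioi volume hsymm, ← mul_assoc]
  norm_num

theorem setLIntegral_prod_self_le_four_mul {s : Set ℝ} (hs : MeasurableSet s)
    {f : ℝ × ℝ → ℝ≥0∞} (hf : ∀ a b, f (a, b) = f (b, a)) :
    ∫⁻ p in s ×ˢ s, f p ≤
      4 * ∫⁻ m, ∫⁻ h in Ioi 0, (s ×ˢ s).indicator f (m + h, m - h) := by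
  rw [setLIntegral_prod_self_eq_four_mul hs hf, Measure.volume_eq_prod, ← Measure.prod_restrict,
    Measure.restrict_univ]
  gcongr
  exact lintegral_prod_le _

theorem halfSemi_eq_four_mul_lintegral_midpoint {s : Set ℝ} (hs : MeasurableSet s)
    {g : ℝ → ℝ} (hg : Measurable g) :
    halfSemi g s = 4 * ∫⁻ m, ∫⁻ t in Ioi 0,
      (s ×ˢ s).indicator (fun p => ENNReal.ofReal ((g p.1 - g p.2) ^ 2)) (m + t, m - t) *
        ENNReal.ofReal ((2 * t) ^ 2)⁻¹ := by
  have hquot (p : ℝ × ℝ) : (s ×ˢ s).indicator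
      (fun p => ENNReal.ofReal ((g p.1 - g p.2) ^ 2 / (p.1 - p.2) ^ 2)) p =
      (s ×ˢ s).indicator (fun p => ENNReal.ofReal ((g p.1 - g p.2) ^ 2)) p *
        ENNReal.ofReal ((p.1 - p.2) ^ 2)⁻¹ := by
    simp only [div_eq_mul_inv, ENNReal.ofReal_mul (sq_nonneg _)]
    exact indicator_mul_left _ _ _
  have hmeas : Measurable ((s ×ˢ s).indicator
      fun p => ENNReal.ofReal ((g p.1 - g p.2) ^ 2 / (p.1 - p.2) ^ 2)) :=
    Measurable.indicator (by fun_prop) (hs.prod hs)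
  rw [halfSemi, setLIntegral_prod_self_eq_four_mul hs fun a b => by ring_nf,
    Measure.volume_eq_prod, setLIntegral_prod _ ?_, Measure.restrict_univ]
  · simp only [hquot, show ∀ m t : ℝ, m + t - (m - t) = 2 * t from fun m t => by ring]
  · exact (hmeas.comp (by fun_prop)).aemeasurable

theorem sub_two_mul_add_eq_intervalIntegral {v g : ℝ → ℝ} {m h : ℝ}
    (hg_right : IntervalIntegrable g volume m (m + h))
    (hg_left : IntervalIntegrable g volume (m - h) m)
    (hv_right : v (m + h) - v m = ∫ x in m..m + h, g x)
    (hv_left : v m - v (m - h) = ∫ x in m - h..m, g x) :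
    v (m + h) - 2 * v m + v (m - h) = ∫ t in 0..h, (g (m + t) - g (m - t)) := by
  have hg_add : IntervalIntegrable (fun t => g (m + t)) volume 0 h := by
    simpa using hg_right.comp_add_left m
  have hg_sub : IntervalIntegrable (fun t => g (m - t)) volume 0 h := by
    simpa using (hg_left.comp_sub_left m).symm
  rw [intervalIntegral.integral_sub hg_add hg_sub, intervalIntegral.integral_comp_add_left,
    intervalIntegral.integral_comp_sub_left, add_zero, sub_zero, ← hv_right, ← hv_left]
  ring

theorem ofReal_sq_intervalIntegral_le {f : ℝ → ℝ} {h : ℝ} (hh : 0 ≤ h)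
    (hf : AEMeasurable f (volume.restrict (Ioc 0 h))) :
    ENNReal.ofReal ((∫ t in 0..h, f t) ^ 2) ≤
      ENNReal.ofReal h * ∫⁻ t in Ioc 0 h, ENNReal.ofReal (f t ^ 2) := by
  simpa [intervalIntegral.integral_of_le hh] using ofReal_sq_integral_le _ hf

section

variable {J : Set ℝ} {v g : ℝ → ℝ}

theorem indicator_secondDiff_le (hJ : J.OrdConnected) (hg : Measurable g)
    (hAC : ∀ s ∈ J, ∀ t ∈ J, IntervalIntegrable g volume s t ∧ v t - v s = ∫ x in s..t, g x)
    (m : ℝ) {h : ℝ} (hh : 0 < h) :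
    (J ×ˢ J).indicator (fun p => ENNReal.ofReal
        ((v p.1 - 2 * v ((p.1 + p.2) / 2) + v p.2) ^ 2 / (p.1 - p.2) ^ 4)) (m + h, m - h) ≤
      ENNReal.ofReal (16 * h ^ 3)⁻¹ * ∫⁻ t in Ioc 0 h,
        (J ×ˢ J).indicator (fun p => ENNReal.ofReal ((g p.1 - g p.2) ^ 2)) (m + t, m - t) := by
  by_cases hmem : (m + h, m - h) ∈ J ×ˢ J
  swap
  · rw [indicator_of_notMem hmem]; exact zero_le
  obtain ⟨hplus, hminus⟩ := hmem
  have hsub : Icc (m - h) (m + h) ⊆ J := hJ.out hminus hplus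
  have hm : m ∈ J := hsub ⟨by linarith, by linarith⟩
  have hinner : ∫⁻ t in Ioc 0 h,
      (J ×ˢ J).indicator (fun p => ENNReal.ofReal ((g p.1 - g p.2) ^ 2)) (m + t, m - t) =
      ∫⁻ t in Ioc 0 h, ENNReal.ofReal ((g (m + t) - g (m - t)) ^ 2) :=
    setLIntegral_congr_fun measurableSet_Ioc fun t ht => indicator_of_mem
      (show (m + t, m - t) ∈ J ×ˢ J from
        ⟨hsub ⟨by linarith [ht.1], by linarith [ht.2]⟩, hsub ⟨by linarith [ht.2], by linarith [ht.1]⟩⟩) _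
  have hsecond := ofReal_sq_intervalIntegral_le hh.le
    (f := fun t => g (m + t) - g (m - t)) (by fun_prop)
  rw [← sub_two_mul_add_eq_intervalIntegral (hAC m hm _ hplus).1 (hAC _ hminus m hm).1
    (hAC m hm _ hplus).2 (hAC _ hminus m hm).2] at hsecond
  rw [indicator_of_mem (show (m + h, m - h) ∈ J ×ˢ J from ⟨hplus, hminus⟩), hinner,
    show (m + h + (m - h)) / 2 = m by ring, show m + h - (m - h) = 2 * h by ring]
  calc ENNReal.ofReal ((v (m + h) - 2 * v m + v (m - h)) ^ 2 / (2 * h) ^ 4)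
      = ENNReal.ofReal (16 * h ^ 4)⁻¹ * ENNReal.ofReal ((v (m + h) - 2 * v m + v (m - h)) ^ 2) := by
        rw [← ENNReal.ofReal_mul (by positivity)]; ring_nf
    _ ≤ ENNReal.ofReal (16 * h ^ 4)⁻¹ *
          (ENNReal.ofReal h * ∫⁻ t in Ioc 0 h, ENNReal.ofReal ((g (m + t) - g (m - t)) ^ 2)) := by
        gcongr
    _ = _ := by
        rw [← mul_assoc, ← ENNReal.ofReal_mul (by positivity)]
        congr 2
        field_simp

theorem setLIntegral_secondDiff_le_halfSemi (hJ : J.OrdConnected) (hg : Measurable g)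
    (hAC : ∀ s ∈ J, ∀ t ∈ J, IntervalIntegrable g volume s t ∧ v t - v s = ∫ x in s..t, g x) :
    ∫⁻ p in J ×ˢ J,
        ENNReal.ofReal ((v p.1 - 2 * v ((p.1 + p.2) / 2) + v p.2) ^ 2 / (p.1 - p.2) ^ 4) ≤
      8⁻¹ * halfSemi g J := by
  set K : ℝ × ℝ → ℝ≥0∞ := (J ×ˢ J).indicator fun p => ENNReal.ofReal ((g p.1 - g p.2) ^ 2)
  have hK : Measurable K :=
    Measurable.indicator (by fun_prop) (hJ.measurableSet.prod hJ.measurableSet)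
  have hkernel (m t : ℝ) (ht : t ∈ Ioi 0) :
      K (m + t, m - t) * ∫⁻ h in Ici t, ENNReal.ofReal (16 * h ^ 3)⁻¹ =
        8⁻¹ * (K (m + t, m - t) * ENNReal.ofReal ((2 * t) ^ 2)⁻¹) := by
    rw [lintegral_Ici_ofReal_inv_mul_pow_three (by norm_num) ht, mul_left_comm,
      ← ENNReal.ofReal_ofNat, ← ENNReal.ofReal_inv_of_pos (by norm_num),
      ← ENNReal.ofReal_mul (by norm_num)]
    congr 2
    ring
  calc ∫⁻ p in J ×ˢ J,
        ENNReal.ofReal ((v p.1 - 2 * v ((p.1 + p.2) / 2) + v p.2) ^ 2 / (p.1 - p.2) ^ 4)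
      ≤ 4 * ∫⁻ m, ∫⁻ h in Ioi 0, (J ×ˢ J).indicator (fun p => ENNReal.ofReal
          ((v p.1 - 2 * v ((p.1 + p.2) / 2) + v p.2) ^ 2 / (p.1 - p.2) ^ 4)) (m + h, m - h) :=
        setLIntegral_prod_self_le_four_mul hJ.measurableSet fun a b => by ring_nf
    _ ≤ 4 * ∫⁻ m, ∫⁻ h in Ioi 0,
          ENNReal.ofReal (16 * h ^ 3)⁻¹ * ∫⁻ t in Ioc 0 h, K (m + t, m - t) := by
        gcongr 4 * ?_
        exact lintegral_mono fun m => setLIntegral_mono' measurableSet_Ioi fun h hh =>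
          indicator_secondDiff_le hJ hg hAC m hh
    _ = 4 * ∫⁻ m, ∫⁻ t in Ioi 0, 8⁻¹ * (K (m + t, m - t) * ENNReal.ofReal ((2 * t) ^ 2)⁻¹) := by
        congr 1
        refine lintegral_congr fun m => ?_
        rw [lintegral_Ioi_mul_lintegral_Ioc (by fun_prop) (by fun_prop)]
        exact setLIntegral_congr_fun measurableSet_Ioi (hkernel m)
    _ = 8⁻¹ * halfSemi g J := by
        rw [halfSemi_eq_four_mul_lintegral_midpoint hJ.measurableSet hg]
        simp only [lintegral_const_mul' _ _ (by norm_num : (8 : ℝ≥0∞)⁻¹ ≠ ⊤)]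
        ring

end

theorem halfSemi_congr_ae {f g : ℝ → ℝ} {s : Set ℝ} (hfg : f =ᵐ[volume.restrict s] g) :
    halfSemi f s = halfSemi g s := by
  rw [halfSemi, halfSemi, Measure.volume_eq_prod, ← Measure.prod_restrict]
  refine lintegral_congr_ae ?_
  filter_upwards [Measure.quasiMeasurePreserving_fst.ae_eq_comp hfg,
    Measure.quasiMeasurePreserving_snd.ae_eq_comp hfg] with p hp₁ hp₂
  simp only [Function.comp_apply] at hp₁ hp₂
  rw [hp₁, hp₂]

theorem seminorm_comparison_general
    (J : Set ℝ) (hJint : J.OrdConnected)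
    (u u' : ℝ → ℝ)
    (hAC : ∀ s ∈ J, ∀ t ∈ J, IntervalIntegrable u' volume s t ∧
      u t - u s = ∫ x in s..t, u' x)
    (hu'L2 : MemLp u' 2 (volume.restrict J)) :
    (∫⁻ p in J ×ˢ J,
        ENNReal.ofReal ((u p.1 - 2 * u ((p.1 + p.2) / 2) + u p.2) ^ 2 / (p.1 - p.2) ^ 4))
      ≤ (1 / 8) * halfSemi u' J := by
  obtain ⟨g, hg, hu'g⟩ := hu'L2.aestronglyMeasurable.aemeasurable
  have hu'g_on (s t : ℝ) (hs : s ∈ J) (ht : t ∈ J) : u' =ᵐ[volume.restrict (uIoc s t)] g :=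
    ae_restrict_of_ae_restrict_of_subset (uIoc_subset_uIcc.trans (hJint.uIcc_subset hs ht)) hu'g
  have hACg : ∀ s ∈ J, ∀ t ∈ J, IntervalIntegrable g volume s t ∧ u t - u s = ∫ x in s..t, g x :=
    fun s hs t ht => ⟨(hAC s hs t ht).1.congr_ae (hu'g_on s t hs ht),
      (hAC s hs t ht).2.trans (intervalIntegral.integral_congr_ae_restrict (hu'g_on s t hs ht))⟩
  rw [halfSemi_congr_ae hu'g, one_div]
  exact setLIntegral_secondDiff_le_halfSemi hJint hg hACg

/-- **Lemma 2.4, comparison of fractional seminorms.**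
For an open interval `J` and `u ∈ H^{3/2}(J)` (with a.e. derivative `u'`),
`|u|²_{H^{3/2}(J)} ≤ (1/8)·|u'|²_{H^{1/2}(J)}`. -/
theorem seminorm_comparison
    (J : Set ℝ) (hJopen : IsOpen J) (hJint : J.OrdConnected)
    (u u' : ℝ → ℝ)
    (hAC : ∀ s ∈ J, ∀ t ∈ J, IntervalIntegrable u' volume s t ∧
      u t - u s = ∫ x in s..t, u' x)
    (huL2 : MemLp u 2 (volume.restrict J))
    (hu'L2 : MemLp u' 2 (volume.restrict J))
    (hsemi : halfSemi u' J ≠ ⊤) :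
    (∫⁻ p in J ×ˢ J,
        ENNReal.ofReal ((u p.1 - 2 * u ((p.1 + p.2) / 2) + u p.2) ^ 2 / (p.1 - p.2) ^ 4))
      ≤ (1 / 8) * halfSemi u' J :=
  seminorm_comparison_general J hJint u u' hAC hu'L2

end
end

section
/- Assume V : ℝ → [0,∞) satisfies (H^V). Then the constant c̄ belongs to (0,∞), i.e. 0 < c̄ < ∞. -/
open MeasureTheory Set Filter Topology ENNReal

noncomputable section

open scoped NNReal

/-!
Finiteness: `α + (β - α) · smoothTransition` is admissible, because its derivative is Lipschitz
with compact support, so the Gagliardo integrand is bounded by `A / (1 + (x - y)²)` on two strips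
and vanishes elsewhere.

Positivity: let `d = (β - α) / 4`; continuity and coercivity give `V ≥ m > 0` at distance `≥ d`
from both wells. If an admissible `f` stays that far from the wells on an interval of length 2,
the potential term is at least `2m`. Otherwise, after the last time `a` with `f a ≤ α + d`, the
profile comes `d`-close to `β` in every interval of length 2: it rises by `2d` on some `(a, q]` of
length `≤ 2` and then changes by at most `2d` on some `(q, r]` of length `≥ 6`. So the means of
`f'` on these two nearby intervals differ by at least `2d / 3`, while by Cauchy–Schwarz that
difference is controlled by the `H^{1/2}` seminorm of `f'`.
-/

theorem IsACProfile.continuous {f f' : ℝ → ℝ} (hf : IsACProfile f f') : Continuous f := by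
  have : f = fun x => f 0 + ∫ t in (0 : ℝ)..x, f' t := funext fun x => by linarith [hf.2 0 x]
  rw [this]
  exact continuous_const.add (intervalIntegral.continuous_primitive hf.1 0)

theorem isACProfile_deriv {f : ℝ → ℝ} (hf : ContDiff ℝ 1 f) : IsACProfile f (deriv f) :=
  have hcont := hf.continuous_deriv le_rfl
  ⟨fun s t => hcont.intervalIntegrable s t, fun s t => (intervalIntegral.integral_deriv_eq_sub
    (fun x _ => hf.differentiable one_ne_zero x) (hcont.intervalIntegrable s t)).symm⟩

theorem sq_sub_div_sq_sub_le {g : ℝ → ℝ} {K : ℝ≥0} {B : ℝ} (hg : LipschitzWith K g)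
    (hB : ∀ x, |g x| ≤ B) (x y : ℝ) :
    (g x - g y) ^ 2 / (x - y) ^ 2 ≤ (K ^ 2 + 4 * B ^ 2) / (1 + (x - y) ^ 2) := by
  rcases eq_or_ne (x - y) 0 with h | h
  · rw [h, zero_pow two_ne_zero, _root_.div_zero]
    positivity
  have hlip : (g x - g y) ^ 2 ≤ K ^ 2 * (x - y) ^ 2 := by
    have := hg.dist_le_mul x y
    rw [Real.dist_eq, Real.dist_eq] at this
    simpa [mul_pow] using pow_le_pow_left₀ (abs_nonneg _) this 2
  have hbdd : (g x - g y) ^ 2 ≤ 4 * B ^ 2 := by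
    have : |g x - g y| ≤ 2 * B := (abs_sub _ _).trans (by linarith [hB x, hB y])
    nlinarith [pow_le_pow_left₀ (abs_nonneg _) this 2, sq_abs (g x - g y)]
  rw [div_le_div_iff₀ (by positivity) (by positivity)]
  nlinarith [mul_le_mul_of_nonneg_right hbdd (sq_nonneg (x - y))]

theorem lintegral_prod_univ_comp_sub (s : Set ℝ) {k : ℝ → ℝ≥0∞} (hk : Measurable k) :
    ∫⁻ z in s ×ˢ univ, k (z.1 - z.2) = volume s * ∫⁻ u, k u := by
  rw [Measure.volume_eq_prod, ← Measure.prod_restrict, Measure.restrict_univ,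
    lintegral_prod (fun z : ℝ × ℝ => k (z.1 - z.2)) (by fun_prop)]
  simp only [lintegral_sub_left_eq_self, lintegral_const, Measure.restrict_apply_univ, mul_comm]

theorem halfSemi_univ_ne_top {g : ℝ → ℝ} {K : ℝ≥0} (hg : LipschitzWith K g)
    (hs : HasCompactSupport g) : halfSemi g univ ≠ ⊤ := by
  obtain ⟨B, hB⟩ := hg.continuous.bounded_above_of_compact_support hs
  obtain ⟨R, -, hR⟩ := hs.exists_pos_le_norm
  set k : ℝ → ℝ≥0∞ := fun u => ENNReal.ofReal ((K ^ 2 + 4 * B ^ 2) / (1 + u ^ 2))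
  set G : ℝ × ℝ → ℝ≥0∞ := (Icc (-R) R ×ˢ univ).indicator fun z => k (z.1 - z.2)
  have hk : Measurable k := by fun_prop
  have hG : Measurable G :=
    (hk.comp (measurable_fst.sub measurable_snd)).indicator (measurableSet_Icc.prod .univ)
  have hpt : ∀ z : ℝ × ℝ,
      ENNReal.ofReal ((g z.1 - g z.2) ^ 2 / (z.1 - z.2) ^ 2) ≤ G z + G z.swap := by
    rintro ⟨x, y⟩
    have hxy := sq_sub_div_sq_sub_le hg (fun x => hB x) x y
    by_cases hx : |x| ≤ R
    · refine le_add_right (le_of_le_of_eq (ENNReal.ofReal_le_ofReal hxy) ?_)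
      exact (indicator_of_mem (s := Icc (-R) R ×ˢ univ)
        (mk_mem_prod (mem_Icc.2 (abs_le.1 hx)) (mem_univ y)) fun z => k (z.1 - z.2)).symm
    by_cases hy : |y| ≤ R
    · refine le_add_left (le_of_le_of_eq (ENNReal.ofReal_le_ofReal hxy) ?_)
      rw [Prod.swap_prod_mk, show G (y, x) = k (y - x) from
        indicator_of_mem (mk_mem_prod (mem_Icc.2 (abs_le.1 hy)) (mem_univ x)) _]
      simp only [k, ← neg_sub y x, neg_sq]
    simp [hR x (not_le.1 hx).le, hR y (not_le.1 hy).le]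
  have hk_fin : ∫⁻ u, k u ≠ ⊤ := by
    simpa only [k, div_eq_mul_inv] using
      ((integrable_inv_one_add_sq.const_mul (K ^ 2 + 4 * B ^ 2 : ℝ)).lintegral_lt_top).ne
  have hG_int : ∫⁻ z, G z = volume (Icc (-R) R) * ∫⁻ u, k u := by
    rw [lintegral_indicator (measurableSet_Icc.prod .univ), lintegral_prod_univ_comp_sub _ hk]
  have hG_swap : ∫⁻ z : ℝ × ℝ, G z.swap = ∫⁻ z, G z := by
    rw [Measure.volume_eq_prod, lintegral_prod_swap]
  rw [halfSemi, univ_prod_univ, Measure.restrict_univ]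
  refine ne_top_of_le_ne_top ?_ ((lintegral_mono hpt).trans_eq (lintegral_add_left hG _))
  rw [hG_swap, hG_int, Real.volume_Icc]
  exact ENNReal.add_ne_top.2 ⟨ENNReal.mul_ne_top ENNReal.ofReal_ne_top hk_fin,
    ENNReal.mul_ne_top ENNReal.ofReal_ne_top hk_fin⟩

theorem cUpSet_nonempty (V : ℝ → ℝ) (α β : ℝ) : (cUpSet V α β).Nonempty := by
  set f : ℝ → ℝ := fun x => α + (β - α) * Real.smoothTransition x
  have hf : ContDiff ℝ 2 f := by unfold f; fun_prop
  have hsupp : HasCompactSupport (deriv f) := by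
    refine HasCompactSupport.intro (isCompact_Icc (a := 0) (b := 1)) fun x hx => ?_
    rcases not_and_or.1 hx with hx | hx
    · have : f =ᶠ[𝓝 x] fun _ => α :=
        mem_of_superset (Iio_mem_nhds (not_le.1 hx)) fun y (hy : y < 0) => by
          simp only [mem_ofPred_eq, f, Real.smoothTransition.zero_of_nonpos hy.le, mul_zero,
            add_zero]
      simp [this.deriv_eq]
    · have : f =ᶠ[𝓝 x] fun _ => β :=
        mem_of_superset (Ioi_mem_nhds (not_le.1 hx)) fun y (hy : 1 < y) => by
          simp only [mem_ofPred_eq, f, Real.smoothTransition.one_of_one_le hy.le]; ring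
      simp [this.deriv_eq]
  obtain ⟨K, hK⟩ := hf.deriv'.lipschitzWith_of_hasCompactSupport hsupp one_ne_zero
  refine ⟨_, f, deriv f, 1, one_pos, isACProfile_deriv (hf.of_le one_le_two),
    halfSemi_univ_ne_top hK hsupp, fun t ht => ?_, rfl⟩
  simp [f, Real.smoothTransition.zero_of_nonpos (by linarith : -t ≤ 0),
    Real.smoothTransition.one_of_one_le ht]

theorem eLpNorm_two_sub_div_sub (g : ℝ → ℝ) :
    eLpNorm (fun z : ℝ × ℝ => (g z.1 - g z.2) / (z.1 - z.2)) 2 volume =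
      halfSemi g univ ^ (1 / 2 : ℝ) := by
  rw [eLpNorm_eq_lintegral_rpow_enorm_toReal two_ne_zero ENNReal.ofNat_ne_top, halfSemi,
    univ_prod_univ, Measure.restrict_univ, ENNReal.toReal_ofNat]
  congr 2 with z
  rw [Real.enorm_eq_ofReal_abs, ENNReal.ofReal_rpow_of_nonneg (abs_nonneg _) two_pos.le,
    Real.rpow_two, sq_abs, div_pow]

theorem abs_integral_mul_sub_integral_mul_le {g : ℝ → ℝ} {I J : Set ℝ} {D : ℝ} (hD : 0 ≤ D)
    (hI : MeasurableSet I) (hJ : MeasurableSet J) (hIfin : volume I ≠ ⊤) (hJfin : volume J ≠ ⊤)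
    (hgI : IntegrableOn g I) (hgJ : IntegrableOn g J) (hIJ : ∀ x ∈ I, ∀ y ∈ J, |x - y| ≤ D)
    (hg : halfSemi g univ ≠ ⊤) :
    |(∫ x in I, g x) * volume.real J - (∫ y in J, g y) * volume.real I| ≤
      D * (√(halfSemi g univ).toReal * √(volume.real I * volume.real J)) := by
  have : IsFiniteMeasure (volume.restrict I) := isFiniteMeasure_restrict.2 hIfin
  have : IsFiniteMeasure (volume.restrict J) := isFiniteMeasure_restrict.2 hJfin
  set ρ := volume.restrict (I ×ˢ J)
  have hρ : ρ = (volume.restrict I).prod (volume.restrict J) := by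
    rw [Measure.prod_restrict]
    rfl
  set h : ℝ × ℝ → ℝ := fun z => (g z.1 - g z.2) / (z.1 - z.2)
  have hmeas : AEStronglyMeasurable h ρ := by
    rw [hρ]
    exact (hgI.1.comp_fst.sub hgJ.1.comp_snd).div₀
      (continuous_fst.sub continuous_snd).aestronglyMeasurable
  have hmean : ∫ z, (g z.1 - g z.2) ∂ρ =
      (∫ x in I, g x) * volume.real J - (∫ y in J, g y) * volume.real I := by
    rw [hρ, integral_sub (hgI.comp_fst _) (hgJ.comp_snd _), integral_fun_fst, integral_fun_snd]
    simp only [measureReal_restrict_apply_univ, smul_eq_mul, mul_comm]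
  have hpt : ∀ᵐ z ∂ρ, ‖g z.1 - g z.2‖ₑ ≤ ENNReal.ofReal D * ‖h z‖ₑ := by
    refine (ae_restrict_iff' (hI.prod hJ)).2 (ae_of_all _ fun z hz => ?_)
    rw [Real.enorm_eq_ofReal_abs, Real.enorm_eq_ofReal_abs, ← ENNReal.ofReal_mul hD]
    refine ENNReal.ofReal_le_ofReal ?_
    rcases eq_or_ne (z.1 - z.2) 0 with h0 | h0
    · rw [sub_eq_zero.1 h0, sub_self, abs_zero]
      positivity
    · calc |g z.1 - g z.2| = |z.1 - z.2| * |h z| := by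
            rw [← abs_mul, mul_div_cancel₀ _ h0]
        _ ≤ D * |h z| := by gcongr; exact hIJ _ hz.1 _ hz.2
  have hρuniv : ρ univ = ENNReal.ofReal (volume.real I * volume.real J) := by
    rw [Measure.restrict_apply_univ, Measure.volume_eq_prod, Measure.prod_prod,
      ENNReal.ofReal_mul measureReal_nonneg, ofReal_measureReal hIfin, ofReal_measureReal hJfin]
  have key : ‖∫ z, (g z.1 - g z.2) ∂ρ‖ₑ ≤
      ENNReal.ofReal D * (halfSemi g univ ^ (1 / 2 : ℝ) * ρ univ ^ (1 / 2 : ℝ)) :=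
    calc ‖∫ z, (g z.1 - g z.2) ∂ρ‖ₑ ≤ ∫⁻ z, ‖g z.1 - g z.2‖ₑ ∂ρ :=
          enorm_integral_le_lintegral_enorm _
      _ ≤ ∫⁻ z, ENNReal.ofReal D * ‖h z‖ₑ ∂ρ := lintegral_mono_ae hpt
      _ = ENNReal.ofReal D * eLpNorm h 1 ρ := by
          rw [lintegral_const_mul' _ _ ENNReal.ofReal_ne_top, eLpNorm_one_eq_lintegral_enorm]
      _ ≤ ENNReal.ofReal D * (eLpNorm h 2 ρ * ρ univ ^ (1 / 2 : ℝ)) := by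
          gcongr
          have := eLpNorm_le_eLpNorm_mul_rpow_measure_univ one_le_two hmeas
          rwa [ENNReal.toReal_one, ENNReal.toReal_ofNat,
            show (1 : ℝ) / 1 - 1 / 2 = 1 / 2 by norm_num] at this
      _ ≤ ENNReal.ofReal D * (halfSemi g univ ^ (1 / 2 : ℝ) * ρ univ ^ (1 / 2 : ℝ)) := by
          rw [← eLpNorm_two_sub_div_sub]
          gcongr
          exact Measure.restrict_le_self
  rw [← hmean, ← Real.norm_eq_abs, ← toReal_enorm]
  convert ENNReal.toReal_mono (by rw [hρuniv]; finiteness) key using 1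
  rw [hρuniv, ENNReal.toReal_mul, ENNReal.toReal_mul, ← ENNReal.toReal_rpow,
    ← ENNReal.toReal_rpow, ENNReal.toReal_ofReal hD, ENNReal.toReal_ofReal (by positivity),
    Real.sqrt_eq_rpow, Real.sqrt_eq_rpow]

theorem sq_le_halfSemi_of_rise {f f' : ℝ → ℝ} {a q r δ : ℝ} (hf : IsACProfile f f')
    (hH : halfSemi f' univ ≠ ⊤) (haq : a < q) (hqa : q ≤ a + 2) (hqr : q + 6 ≤ r)
    (hra : r ≤ a + 10) (hδ : 0 ≤ δ) (hrise : δ ≤ f q - f a) (hflat : f r - f q ≤ δ) :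
    δ ^ 2 ≤ 125 * (halfSemi f' univ).toReal := by
  have hIoc : ∀ {s t : ℝ}, s ≤ t → ∫ x in Ioc s t, f' x = f t - f s := fun hst => by
    rw [← intervalIntegral.integral_of_le hst, hf.2]
  have hsep : ∀ x ∈ Ioc a q, ∀ y ∈ Ioc q r, |x - y| ≤ 10 := fun x hx y hy =>
    abs_le.2 ⟨by linarith [hy.2, hx.1], by linarith [hx.2, hy.1]⟩
  have key := abs_integral_mul_sub_integral_mul_le (by norm_num) measurableSet_Ioc
    measurableSet_Ioc measure_Ioc_lt_top.ne measure_Ioc_lt_top.ne (hf.1 a q).1 (hf.1 q r).1 hsep hH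
  rw [hIoc haq.le, hIoc (by linarith), Real.volume_real_Ioc_of_le haq.le,
    Real.volume_real_Ioc_of_le (by linarith)] at key
  set H := (halfSemi f' univ).toReal
  have hH0 : 0 ≤ H := ENNReal.toReal_nonneg
  have hgap : 4 * δ ≤ (f q - f a) * (r - q) - (f r - f q) * (q - a) := by
    have h1 : δ * 6 ≤ (f q - f a) * (r - q) :=
      mul_le_mul hrise (by linarith) (by norm_num) (by linarith)
    have h2 : (f r - f q) * (q - a) ≤ δ * 2 :=
      (mul_le_mul_of_nonneg_right hflat (by linarith)).trans
        (mul_le_mul_of_nonneg_left (by linarith) hδ)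
    linarith
  have hlen : √((q - a) * (r - q)) ≤ √20 := Real.sqrt_le_sqrt (by nlinarith)
  have h4δ : 4 * δ ≤ 10 * (√H * √20) :=
    calc 4 * δ ≤ 10 * (√H * √((q - a) * (r - q))) := hgap.trans ((le_abs_self _).trans key)
      _ ≤ 10 * (√H * √20) := by gcongr
  have := pow_le_pow_left₀ (by positivity) h4δ 2
  rw [mul_pow, mul_pow, mul_pow, Real.sq_sqrt hH0, Real.sq_sqrt (by norm_num)] at this
  linarith

theorem sq_le_halfSemi_of_returns {f f' : ℝ → ℝ} {a β d : ℝ} (hf : IsACProfile f f')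
    (hH : halfSemi f' univ ≠ ⊤) (ha : f a ≤ β - 3 * d)
    (hnear : ∀ c, a ≤ c → ∃ x ∈ Ioc c (c + 2), |f x - β| < d) :
    (2 * d) ^ 2 ≤ 125 * (halfSemi f' univ).toReal := by
  obtain ⟨q, ⟨hq₁, hq₂⟩, hq⟩ := hnear a le_rfl
  obtain ⟨r, ⟨hr₁, hr₂⟩, hr⟩ := hnear (a + 8) (by linarith)
  rw [abs_lt] at hq hr
  exact sq_le_halfSemi_of_rise hf hH hq₁ hq₂ (by linarith) (by linarith) (by linarith)
    (by linarith) (by linarith)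

theorem exists_last_le_of_continuous {f : ℝ → ℝ} {c x₀ R : ℝ} (hf : Continuous f)
    (hx₀ : f x₀ ≤ c) (hR : ∀ x, R ≤ x → c < f x) : ∃ a, f a ≤ c ∧ ∀ x, a < x → c < f x := by
  have hbdd : BddAbove {x | f x ≤ c} :=
    ⟨R, fun x hx => not_lt.1 fun h => (hR x h.le).not_ge hx⟩
  exact ⟨_, (isClosed_le hf continuous_const).csSup_mem ⟨x₀, hx₀⟩ hbdd,
    fun x hx => not_le.1 fun h => hx.not_ge (le_csSup hbdd h)⟩

theorem exists_one_le_of_coercive {V : ℝ → ℝ} {C : ℝ} (hC : 0 < C)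
    (hV : ∀ z, C * |z| ^ 2 - 1 / C ≤ V z) : ∃ M, ∀ z, M ≤ |z| → 1 ≤ V z := by
  refine ⟨(1 + 1 / C) / C + 1, fun z hz => ?_⟩
  have hM : C * ((1 + 1 / C) / C) = 1 + 1 / C := by field_simp
  have h1 : 0 ≤ (1 + 1 / C) / C := by positivity
  nlinarith [hV z, mul_le_mul_of_nonneg_left (show (1 + 1 / C) / C ≤ |z| ^ 2 by nlinarith) hC.le]

theorem exists_pos_forall_le_of_isClosed {V : ℝ → ℝ} {S : Set ℝ} {M : ℝ} (hV : Continuous V)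
    (hS : IsClosed S) (hpos : ∀ z ∈ S, 0 < V z) (hfar : ∀ z, M ≤ |z| → 1 ≤ V z) :
    ∃ m > 0, ∀ z ∈ S, m ≤ V z := by
  obtain ⟨m, hm, hmK⟩ := (isCompact_Icc (a := -M) (b := M)).inter_right hS |>.exists_forall_le'
    hV.continuousOn fun z hz => hpos z hz.2
  refine ⟨min m 1, lt_min hm one_pos, fun z hz => ?_⟩
  rcases le_or_gt |z| M with h | h
  · exact (min_le_left _ _).trans (hmK z ⟨abs_le.1 h, hz⟩)
  · exact (min_le_right _ _).trans (hfar z h.le)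

theorem integrable_comp_of_eq_on_tails {V f : ℝ → ℝ} {α β R : ℝ} (hV : Continuous V)
    (hf : Continuous f) (hα : V α = 0) (hβ : V β = 0) (hbc : ∀ t, R ≤ t → f (-t) = α ∧ f t = β) :
    Integrable fun x => V (f x) := by
  refine (hV.comp hf).integrable_of_hasCompactSupport
    (HasCompactSupport.intro (isCompact_Icc (a := -R) (b := R)) fun x hx => ?_)
  rcases not_and_or.1 hx with hx | hx
  · have := (hbc (-x) (by linarith)).1
    rw [neg_neg] at this
    simp [this, hα]
  · simp [(hbc x (by linarith)).2, hβ]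

theorem HypV.exists_pos_le_away_from_wells {V : ℝ → ℝ} {α β d : ℝ} (hV : HypV V α β)
    (hd : 0 < d) : ∃ m > 0, ∀ z ∈ {z : ℝ | d ≤ |z - α| ∧ d ≤ |z - β|}, m ≤ V z := by
  obtain ⟨hVc, hVnn, -, hVzero, ⟨C, hC, hcoer⟩, -⟩ := hV
  obtain ⟨M, hM⟩ := exists_one_le_of_coercive hC hcoer
  refine exists_pos_forall_le_of_isClosed hVc ?_ (fun z hz => (hVnn z).lt_of_ne' fun h => ?_) hM
  · simp only [ofPred_and]
    exact (isClosed_le continuous_const (by fun_prop)).inter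
      (isClosed_le continuous_const (by fun_prop))
  · rcases (hVzero z).1 h with rfl | rfl
    · have := hz.1; rw [sub_self, abs_zero] at this; linarith
    · have := hz.2; rw [sub_self, abs_zero] at this; linarith

theorem HypV.exists_pos_mem_lowerBounds_cUpSet {V : ℝ → ℝ} {α β : ℝ} (hV : HypV V α β) :
    ∃ c₀ > 0, c₀ ∈ lowerBounds (cUpSet V α β) := by
  set d := (β - α) / 4
  have hβ : β = α + 4 * d := by simp only [d]; ring
  have hd : 0 < d := by linarith [hV.2.2.1]
  obtain ⟨m, hm, hmV⟩ := hV.exists_pos_le_away_from_wells hd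
  obtain ⟨hVc, hVnn, -, hVzero, -⟩ := hV
  refine ⟨min (2 * m) (7 / 16 * ((2 * d) ^ 2 / 125)), by positivity, ?_⟩
  rintro e ⟨f, f', R, -, hf, hH, hbc, rfl⟩
  have hP : 0 ≤ ∫ x, V (f x) := integral_nonneg fun x => hVnn _
  have hH0 : 0 ≤ (halfSemi f' univ).toReal := ENNReal.toReal_nonneg
  by_cases hfar : ∃ c, ∀ x ∈ Ioc c (c + 2), d ≤ |f x - α| ∧ d ≤ |f x - β|
  · obtain ⟨c, hc⟩ := hfar
    have hint := integrable_comp_of_eq_on_tails hVc hf.continuous ((hVzero α).2 (.inl rfl))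
      ((hVzero β).2 (.inr rfl)) hbc
    have : 2 * m ≤ ∫ x, V (f x) :=
      calc 2 * m = m * volume.real (Ioc c (c + 2)) := by
            rw [Real.volume_real_Ioc_of_le (by linarith)]; ring
        _ ≤ ∫ x in Ioc c (c + 2), V (f x) := setIntegral_ge_of_const_le_real measurableSet_Ioc
            measure_Ioc_lt_top.ne (fun x hx => hmV _ (hc x hx)) hint.integrableOn
        _ ≤ ∫ x, V (f x) := setIntegral_le_integral hint (ae_of_all _ fun x => hVnn _)
    linarith [min_le_left (2 * m) (7 / 16 * ((2 * d) ^ 2 / 125))]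
  push Not at hfar
  obtain ⟨a, hfa, hgt⟩ := exists_last_le_of_continuous (c := α + d) (x₀ := -R) hf.continuous
    (by rw [(hbc R le_rfl).1]; linarith) fun x hx => by rw [(hbc x hx).2]; linarith
  have := sq_le_halfSemi_of_returns (a := a) (β := β) (d := d) hf hH (by linarith) fun c hc => ?_
  · linarith [min_le_right (2 * m) (7 / 16 * ((2 * d) ^ 2 / 125))]
  obtain ⟨x, hx, hxβ⟩ := hfar c
  have := hgt x (hc.trans_lt hx.1)
  exact ⟨x, hx, hxβ (by rw [abs_of_pos (by linarith)]; linarith)⟩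

/-- **Lemma 3.3.** Under `(H^V)` the constant `c̄` is finite and
strictly positive: the admissible class is nonempty (so `c̄ < ∞`) and `0 < c̄`. -/
theorem cUp_pos_finite (V : ℝ → ℝ) (α β : ℝ) (hV : HypV V α β) :
    (cUpSet V α β).Nonempty ∧ 0 < cUp V α β := by
  have hne := cUpSet_nonempty V α β
  obtain ⟨c₀, hc₀, hlow⟩ := hV.exists_pos_mem_lowerBounds_cUpSet
  exact ⟨hne, hc₀.trans_le (le_csInf hne hlow)⟩
end
end

section
/- Assume V : ℝ → [0,∞) satisfies (H^V). Then c̲ = c⋆, where c⋆ := inf{ (3/2^{5/3}) · ( ∫_{−1}^{1}∫_{−1}^{1} |g'(x)−g'(y)|²/|x−y|² dx dy )^{1/3} · ( ∫_{−1}^{1} V(g(x)) dx )^{2/3} : g ∈ H^{3/2}_loc(ℝ), g' ∈ H^{1/2}(ℝ), g(−t) = α and g(t) = β for all t ≥ 1 }. -/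
open MeasureTheory Set Filter Topology ENNReal

noncomputable section

/-- Admissible class for the scaled characterization `c⋆` of `c̲`. -/
def cStarSet (V : ℝ → ℝ) (α β : ℝ) : Set ℝ :=
  {e : ℝ | ∃ g g' : ℝ → ℝ, IsACProfile g g' ∧ halfSemi g' univ ≠ ⊤ ∧
    (∀ t : ℝ, 1 ≤ t → g (-t) = α ∧ g t = β) ∧
    e = (3 / (2:ℝ) ^ ((5:ℝ) / 3))
          * (halfSemi g' (Ioo (-1) 1)).toReal ^ ((1:ℝ) / 3)
          * (∫ x in Ioo (-1:ℝ) 1, V (g x)) ^ ((2:ℝ) / 3)}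

/-!
Rescaling `g ↦ g(·/R)` turns a profile `g` that is admissible at scale `1` into one admissible at
scale `R`; the `H^{1/2}` seminorm of the derivative on `(-R, R)` becomes `A / R²` and the potential
energy `R B`, where `A, B` are those of `g` on `(-1, 1)`. Hence `c̲` is the infimum over `g` of
`min_{R > 0} (A / (8 R²) + R B)`, and AM-GM applied to `A / (8 R²)`, `R B / 2`, `R B / 2` computes
this minimum as `3 · 2^{-5/3} A^{1/3} B^{2/3}`.
-/

lemma setLIntegral_comp_smul {E : Type*} [NormedAddCommGroup E] [NormedSpace ℝ E]
    [MeasurableSpace E] [BorelSpace E] [FiniteDimensional ℝ E] (μ : Measure E)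
    [μ.IsAddHaarMeasure] (f : E → ℝ≥0∞) {r : ℝ} (hr : r ≠ 0) (s : Set E) :
    ∫⁻ x in (r • ·) ⁻¹' s, f (r • x) ∂μ
      = ENNReal.ofReal |(r ^ Module.finrank ℝ E)⁻¹| * ∫⁻ x in s, f x ∂μ := by
  have he : MeasurableEmbedding (r • · : E → E) :=
    (Homeomorph.smul (Units.mk0 r hr)).isClosedEmbedding.measurableEmbedding
  rw [← he.lintegral_map, ← he.restrict_map]
  change ∫⁻ x, f x ∂(Measure.map (r • ·) μ).restrict s = _
  rw [Measure.map_addHaar_smul μ hr, Measure.restrict_smul, lintegral_smul_measure, smul_eq_mul]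

lemma halfSemi_comp_mul (f' : ℝ → ℝ) {s : ℝ} (hs : s ≠ 0) (S : Set ℝ) :
    halfSemi (fun x => s * f' (s * x)) ((s * ·) ⁻¹' S)
      = ENNReal.ofReal (s ^ 2) * halfSemi f' S := by
  have key := setLIntegral_comp_smul (volume : Measure (ℝ × ℝ))
    (fun p => ENNReal.ofReal ((f' p.1 - f' p.2) ^ 2 / (p.1 - p.2) ^ 2)) hs (S ×ˢ S)
  have hset : (fun p : ℝ × ℝ => s • p) ⁻¹' (S ×ˢ S)
      = ((s * ·) ⁻¹' S) ×ˢ ((s * ·) ⁻¹' S) := rfl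
  simp only [hset, Prod.smul_fst, Prod.smul_snd, smul_eq_mul, Module.finrank_prod,
    Module.finrank_self, Nat.reduceAdd] at key
  have hpt : ∀ p : ℝ × ℝ,
      ENNReal.ofReal ((s * f' (s * p.1) - s * f' (s * p.2)) ^ 2 / (p.1 - p.2) ^ 2)
        = ENNReal.ofReal (s ^ 4)
          * ENNReal.ofReal ((f' (s * p.1) - f' (s * p.2)) ^ 2 / (s * p.1 - s * p.2) ^ 2) := by
    intro p
    rw [← ENNReal.ofReal_mul (by positivity)]
    congr 1
    rw [← mul_sub, ← mul_sub, mul_pow, mul_pow]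
    field_simp
  rw [halfSemi, halfSemi, lintegral_congr hpt, lintegral_const_mul' _ _ ENNReal.ofReal_ne_top,
    key, ← mul_assoc, ← ENNReal.ofReal_mul (by positivity)]
  congr 2
  rw [abs_of_nonneg (by positivity)]
  field_simp

lemma IsACProfile.comp_mul {f f' : ℝ → ℝ} (h : IsACProfile f f') {s : ℝ} (hs : s ≠ 0) :
    IsACProfile (fun x => f (s * x)) (fun x => s * f' (s * x)) := by
  obtain ⟨hint, hftc⟩ := h
  refine ⟨fun a b => ?_, fun a b => ?_⟩
  · have h1 := (hint (s * a) (s * b)).comp_mul_left (c := s)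
    rw [mul_div_cancel_left₀ _ hs, mul_div_cancel_left₀ _ hs] at h1
    exact h1.const_mul s
  · rw [intervalIntegral.integral_const_mul, intervalIntegral.integral_comp_mul_left _ hs,
      smul_eq_mul, ← mul_assoc, mul_inv_cancel₀ hs, one_mul, ← hftc]

lemma halfSemi_comp_mul_Ioo (f' : ℝ → ℝ) {s : ℝ} (hs : 0 < s) (R : ℝ) :
    halfSemi (fun x => s * f' (s * x)) (Ioo (-(R / s)) (R / s))
      = ENNReal.ofReal (s ^ 2) * halfSemi f' (Ioo (-R) R) := by
  rw [← halfSemi_comp_mul f' hs.ne', preimage_const_mul_Ioo₀ _ _ hs, neg_div]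

lemma setIntegral_comp_mul_Ioo (h : ℝ → ℝ) {s : ℝ} (hs : 0 < s) (R : ℝ) :
    ∫ x in Ioo (-(R / s)) (R / s), h (s * x) = s⁻¹ * ∫ x in Ioo (-R) R, h x := by
  have := Measure.setIntegral_comp_smul_of_pos volume h (Ioo (-(R / s)) (R / s)) hs
  rw [LinearOrderedField.smul_Ioo hs, mul_neg, mul_div_cancel₀ _ hs.ne'] at this
  simpa using this

def IsTransitionProfile (α β R : ℝ) (f f' : ℝ → ℝ) : Prop :=
  IsACProfile f f' ∧ halfSemi f' univ ≠ ⊤ ∧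
    ∀ t : ℝ, R ≤ t → f (-t) = α ∧ f t = β

lemma IsTransitionProfile.comp_mul {α β R : ℝ} {f f' : ℝ → ℝ}
    (h : IsTransitionProfile α β R f f') {s : ℝ} (hs : 0 < s) :
    IsTransitionProfile α β (R / s) (fun x => f (s * x)) (fun x => s * f' (s * x)) := by
  obtain ⟨hAC, hfin, hbc⟩ := h
  refine ⟨hAC.comp_mul hs.ne', ?_, fun t ht => ?_⟩
  · rw [← preimage_univ (f := (s * ·)), halfSemi_comp_mul f' hs.ne']
    exact ENNReal.mul_ne_top ENNReal.ofReal_ne_top hfin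
  · rw [div_le_iff₀' hs] at ht
    simpa only [mul_neg] using hbc _ ht

/-- `min_{s > 0} (s² A / 8 + B / s)`, attained at `s³ = 4 B / A`. -/
def minScaledEnergy (A B : ℝ) : ℝ :=
  (3 / (2:ℝ) ^ ((5:ℝ) / 3)) * A ^ ((1:ℝ) / 3) * B ^ ((2:ℝ) / 3)

section ScaledEnergy

variable {A B : ℝ}

lemma minScaledEnergy_nonneg (hA : 0 ≤ A) (hB : 0 ≤ B) : 0 ≤ minScaledEnergy A B := by
  unfold minScaledEnergy; positivity

lemma minScaledEnergy_pow_three (hA : 0 ≤ A) (hB : 0 ≤ B) :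
    minScaledEnergy A B ^ 3 = 27 / 32 * A * B ^ 2 := by
  have hcube : ∀ {x : ℝ} (r : ℝ), 0 ≤ x → (x ^ r) ^ 3 = x ^ (r * 3) := fun r hx => by
    exact_mod_cast (Real.rpow_mul_natCast hx r 3).symm
  rw [minScaledEnergy, mul_pow, mul_pow, div_pow, hcube _ zero_le_two, hcube _ hA, hcube _ hB]
  norm_num

lemma minScaledEnergy_le (hA : 0 ≤ A) (hB : 0 ≤ B) {s : ℝ} (hs : 0 < s) :
    minScaledEnergy A B ≤ 1 / 8 * (s ^ 2 * A) + s⁻¹ * B := by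
  set p := 1 / 8 * (s ^ 2 * A)
  set q := s⁻¹ * B / 2
  have hp : 0 ≤ p := by positivity
  have hq : 0 ≤ q := by positivity
  have hpq : 27 / 32 * A * B ^ 2 = 27 * p * q ^ 2 := by
    simp only [p, q]; field_simp; ring
  -- `(p + 2q)³ - 27 p q² = (p - q)² (p + 8q)`
  have hamgm : 27 * p * q ^ 2 ≤ (p + 2 * q) ^ 3 := by
    have h8q : 0 ≤ 8 * q := by positivity
    nlinarith [mul_nonneg (sq_nonneg (p - q)) (add_nonneg hp h8q)]
  rw [show s⁻¹ * B = 2 * q by simp only [q]; ring]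
  refine le_of_pow_le_pow_left₀ three_ne_zero (by positivity) ?_
  rwa [minScaledEnergy_pow_three hA hB, hpq]

lemma exists_scaledEnergy_le (hA : 0 ≤ A) (hB : 0 ≤ B) {ε : ℝ} (hε : 0 < ε) :
    ∃ s > 0, 1 / 8 * (s ^ 2 * A) + s⁻¹ * B ≤ minScaledEnergy A B + ε := by
  rcases hA.eq_or_lt with rfl | hA
  · refine ⟨B / ε + 1, by positivity, ?_⟩
    have : (B / ε + 1)⁻¹ * B ≤ ε := by
      rw [inv_mul_le_iff₀ (by positivity)]; field_simp; linarith
    linarith [minScaledEnergy_nonneg le_rfl hB]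
  rcases hB.eq_or_lt with rfl | hB
  · have hs0 : 0 < 8 * ε / (A + 8 * ε) := by positivity
    have hs1 : 8 * ε / (A + 8 * ε) ≤ 1 := by rw [div_le_one (by positivity)]; linarith
    have hsA : 8 * ε / (A + 8 * ε) * A ≤ 8 * ε := by
      rw [div_mul_eq_mul_div, div_le_iff₀ (by positivity)]; nlinarith
    refine ⟨_, hs0, ?_⟩
    nlinarith [minScaledEnergy_nonneg hA.le le_rfl]
  -- at `s³ = 4B/A` the three terms of the AM-GM inequality are equal
  obtain ⟨s, hs, hs3⟩ : ∃ s > 0, s ^ 3 = 4 * B / A :=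
    ⟨(4 * B / A) ^ ((1:ℝ) / 3), by positivity, by
      rw [← Real.rpow_natCast, ← Real.rpow_mul (by positivity)]; norm_num⟩
  refine ⟨s, hs, le_add_of_le_of_nonneg (le_of_eq ?_) hε.le⟩
  refine (pow_left_inj₀ (by positivity) (minScaledEnergy_nonneg hA.le hB.le) three_ne_zero).1 ?_
  rw [minScaledEnergy_pow_three hA.le hB.le]
  have hA' : A = 4 * B / s ^ 3 := by rw [hs3]; field_simp
  subst hA'
  field_simp
  ring

end ScaledEnergy

lemma csInf_eq_csInf_of_forall_exists_le_add {S T : Set ℝ} (hS : BddBelow S)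
    (hT : BddBelow T) (hST : ∀ x ∈ S, ∃ y ∈ T, y ≤ x)
    (hTS : ∀ y ∈ T, ∀ ε > 0, ∃ x ∈ S, x ≤ y + ε) : sInf S = sInf T := by
  rcases S.eq_empty_or_nonempty with rfl | hSne
  · have hTe : T = ∅ := eq_empty_of_forall_notMem fun y hy => by
      obtain ⟨x, hx, -⟩ := hTS y hy 1 one_pos
      exact hx
    rw [hTe]
  have hTne : T.Nonempty := by
    obtain ⟨x, hx⟩ := hSne
    obtain ⟨y, hy, -⟩ := hST x hx
    exact ⟨y, hy⟩
  refine le_antisymm (le_csInf hTne fun y hy => le_of_forall_pos_le_add fun ε hε => ?_)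
    (le_csInf hSne fun x hx => ?_)
  · obtain ⟨x, hx, hxy⟩ := hTS y hy ε hε
    exact (csInf_le hS hx).trans hxy
  · obtain ⟨y, hy, hyx⟩ := hST x hx
    exact (csInf_le hT hy).trans hyx

section Potential

variable {V : ℝ → ℝ} {α β : ℝ} (hV : ∀ z, 0 ≤ V z)
include hV

lemma setIntegral_comp_nonneg (f : ℝ → ℝ) (S : Set ℝ) : 0 ≤ ∫ x in S, V (f x) :=
  integral_nonneg fun x => hV (f x)

lemma bddBelow_cLowSet : BddBelow (cLowSet V α β) := by
  refine ⟨0, ?_⟩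
  rintro e ⟨f, f', R, -, -, -, -, rfl⟩
  exact add_nonneg (by positivity) (setIntegral_comp_nonneg hV f _)

lemma bddBelow_cStarSet : BddBelow (cStarSet V α β) := by
  refine ⟨0, ?_⟩
  rintro e ⟨g, g', -, -, -, rfl⟩
  exact minScaledEnergy_nonneg ENNReal.toReal_nonneg (setIntegral_comp_nonneg hV g _)

lemma exists_mem_cStarSet_le {e : ℝ} (he : e ∈ cLowSet V α β) :
    ∃ e' ∈ cStarSet V α β, e' ≤ e := by
  obtain ⟨f, f', R, hR, hAC, hfin, hbc, rfl⟩ := he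
  have hg := IsTransitionProfile.comp_mul ⟨hAC, hfin, hbc⟩ hR
  rw [div_self hR.ne'] at hg
  obtain ⟨hgAC, hgfin, hgbc⟩ := hg
  refine ⟨_, ⟨_, _, hgAC, hgfin, hgbc, rfl⟩, ?_⟩
  have hA := halfSemi_comp_mul_Ioo f' hR R
  have hB := setIntegral_comp_mul_Ioo (fun y => V (f y)) hR R
  rw [div_self hR.ne'] at hA hB
  change minScaledEnergy _ _ ≤ _
  rw [hA, hB, ENNReal.toReal_mul, ENNReal.toReal_ofReal (sq_nonneg R)]
  -- the scale `1 / R` undoes the normalisation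
  refine (minScaledEnergy_le (by positivity) (mul_nonneg (by positivity)
    (setIntegral_comp_nonneg hV f _)) (inv_pos.2 hR)).trans_eq ?_
  field_simp

lemma exists_mem_cLowSet_le_add {e : ℝ} (he : e ∈ cStarSet V α β) {ε : ℝ} (hε : 0 < ε) :
    ∃ e' ∈ cLowSet V α β, e' ≤ e + ε := by
  obtain ⟨g, g', hAC, hfin, hbc, rfl⟩ := he
  obtain ⟨s, hs, hle⟩ := exists_scaledEnergy_le ENNReal.toReal_nonneg
    (setIntegral_comp_nonneg hV g (Ioo (-1) 1)) hε
  obtain ⟨hfAC, hffin, hfbc⟩ := IsTransitionProfile.comp_mul ⟨hAC, hfin, hbc⟩ hs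
  refine ⟨_, ⟨_, _, 1 / s, by positivity, hfAC, hffin, hfbc, rfl⟩, ?_⟩
  rwa [halfSemi_comp_mul_Ioo g' hs, setIntegral_comp_mul_Ioo (fun y => V (g y)) hs,
    ENNReal.toReal_mul, ENNReal.toReal_ofReal (sq_nonneg s)]

end Potential

/-- **characterization of `c̲`.** Under `(H^V)`,
`c̲ = c⋆ := inf{ (3/2^{5/3})·(|g'|²_{H^{1/2}((-1,1))})^{1/3}·(∫_{-1}^1 V(g))^{2/3} }`
over `g ∈ H^{3/2}_loc(ℝ)` with `g' ∈ H^{1/2}(ℝ)`, `g(-t) = α`, `g(t) = β` for `t ≥ 1`. -/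
theorem cLow_eq_cStar (V : ℝ → ℝ) (α β : ℝ) (hV : HypV V α β) :
    cLow V α β = sInf (cStarSet V α β) := by
  have hV0 : ∀ z, 0 ≤ V z := hV.2.1
  exact csInf_eq_csInf_of_forall_exists_le_add (bddBelow_cLowSet hV0) (bddBelow_cStarSet hV0)
    (fun _ he => exists_mem_cStarSet_le hV0 he)
    (fun _ he _ hε => exists_mem_cLowSet_le_add hV0 he hε)

end
end

section
/- Let J ⊂ ℝ be an open bounded interval, let θ ∈ L¹(J; [0,1]), and suppose the set X := { x ∈ J : there exists δ₀ = δ₀(x) > 0 such that the average of θ over J ∩ B(x,δ) lies in the open interval (0,1) for all 0 < δ < δ₀ } is finite. Then θ coincides a.e. with a function of bounded variation on J taking values in {0,1}, whose jump set is contained in X. -/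
/-!
Off `X`, arbitrarily small windows `J ∩ B(x, δ)` carry an average of `θ` equal to `0` or `1`,
and a `[0, 1]`-valued function has average `0` (resp. `1`) on a set only if it vanishes
(resp. equals `1`) a.e. there. Hence near every point of `J \ X` the function `θ` is a.e. equal
to a constant `0` or `1`; these constants agree on overlaps because nonempty open sets have
positive measure. The indicator of the set of points near which `θ = 1` a.e. is then locally
constant on `J \ X` and, by Lindelöf and since the finite set `X` is null, equals `θ` a.e.
-/

open MeasureTheory Set Filter Topology ENNReal

section Average

variable {α : Type*} [MeasurableSpace α] {μ : Measure α} {s : Set α} {f : α → ℝ}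

theorem ae_restrict_eq_zero_or_one_of_average_notMem_Ioo (hs : MeasurableSet s) (hμs : μ s ≠ ∞)
    (hf : IntegrableOn f s μ) (hf01 : ∀ x ∈ s, f x ∈ Icc (0 : ℝ) 1)
    (havg : (∫ x in s, f x ∂μ) / μ.real s ∉ Ioo (0 : ℝ) 1) :
    (∀ᵐ x ∂μ.restrict s, f x = 0) ∨ ∀ᵐ x ∂μ.restrict s, f x = 1 := by
  rcases eq_or_ne (μ s) 0 with hμ0 | hμ0
  · simp [Measure.restrict_eq_zero.2 hμ0]
  have hm : 0 < μ.real s := ENNReal.toReal_pos hμ0 hμs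
  have h1 : IntegrableOn (fun _ ↦ (1 : ℝ)) s μ := integrableOn_const hμs
  have hint_nonneg : 0 ≤ ∫ x in s, f x ∂μ := setIntegral_nonneg hs fun x hx ↦ (hf01 x hx).1
  have hint_le : ∫ x in s, f x ∂μ ≤ μ.real s := by
    simpa using setIntegral_mono_on hf h1 hs fun x hx ↦ (hf01 x hx).2
  have hcases : ∫ x in s, f x ∂μ ≤ 0 ∨ μ.real s ≤ ∫ x in s, f x ∂μ := by
    by_contra! h
    exact havg ⟨div_pos h.1 hm, (div_lt_one hm).2 h.2⟩
  rcases hcases with h | h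
  · left
    exact (setIntegral_eq_zero_iff_of_nonneg_ae
      ((ae_restrict_iff' hs).2 (ae_of_all _ fun x hx ↦ (hf01 x hx).1)) hf).1 (h.antisymm hint_nonneg)
  · right
    have hzero : ∫ x in s, (1 - f x) ∂μ = 0 := by
      rw [integral_sub h1 hf]
      simp [le_antisymm hint_le h]
    filter_upwards [(setIntegral_eq_zero_iff_of_nonneg_ae
      ((ae_restrict_iff' hs).2 (ae_of_all _ fun x hx ↦ sub_nonneg.2 (hf01 x hx).2))
      (h1.sub hf)).1 hzero] with x hx
    exact (sub_eq_zero.1 hx).symm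

end Average

theorem exists_ae_restrict_inter_ball_eq_zero_or_one {α : Type*} [PseudoMetricSpace α]
    [MeasurableSpace α] [OpensMeasurableSpace α] {μ : Measure α} {s : Set α} {f : α → ℝ} {x : α}
    (hs : MeasurableSet s) (hμs : μ s ≠ ∞) (hf : IntegrableOn f s μ)
    (hf01 : ∀ x ∈ s, f x ∈ Icc (0 : ℝ) 1)
    (hx : ¬∃ δ₀ > (0 : ℝ), ∀ δ ∈ Ioo (0 : ℝ) δ₀,
      (∫ y in s ∩ Metric.ball x δ, f y ∂μ) / μ.real (s ∩ Metric.ball x δ) ∈ Ioo (0 : ℝ) 1) :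
    ∃ δ > 0, ∃ c : ℝ, (c = 0 ∨ c = 1) ∧ ∀ᵐ y ∂μ.restrict (s ∩ Metric.ball x δ), f y = c := by
  push Not at hx
  obtain ⟨δ, hδ, havg⟩ := hx 1 one_pos
  rcases ae_restrict_eq_zero_or_one_of_average_notMem_Ioo (hs.inter measurableSet_ball)
    ((measure_mono inter_subset_left).trans_lt hμs.lt_top).ne (hf.mono_set inter_subset_left)
    (fun y hy ↦ hf01 y hy.1) havg with h | h
  exacts [⟨δ, hδ.1, 0, .inl rfl, h⟩, ⟨δ, hδ.1, 1, .inr rfl, h⟩]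

section Local

variable {α β : Type*} [TopologicalSpace α] [MeasurableSpace α] {μ : Measure α}

theorem ae_imp_of_forall_exists_nhds_ae_restrict [SecondCountableTopology α] {s : Set α}
    {p : α → Prop} (h : ∀ x ∈ s, ∃ u ∈ 𝓝 x, ∀ᵐ y ∂μ.restrict u, p y) :
    ∀ᵐ y ∂μ, y ∈ s → p y := by
  rw [ae_iff]
  refine measure_null_of_locally_null _ fun x hx ↦ ?_
  obtain ⟨u, hu, hpu⟩ := h x (Classical.not_imp.1 hx).1
  refine ⟨_, inter_mem_nhdsWithin _ hu, measure_mono_null (t := {y | ¬p y} ∩ u)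
    (fun y hy ↦ ⟨(Classical.not_imp.1 hy.1).2, hy.2⟩) ?_⟩
  exact nonpos_iff_eq_zero.1 ((Measure.le_restrict_apply u _).trans_eq (ae_iff.1 hpu))

def HasAEValueNear (μ : Measure α) (f : α → β) (c : β) (x : α) : Prop :=
  ∃ u ∈ 𝓝 x, ∀ᵐ y ∂μ.restrict u, f y = c

theorem HasAEValueNear.unique [μ.IsOpenPosMeasure] {f : α → β} {c c' : β} {x : α}
    (h : HasAEValueNear μ f c x) (h' : HasAEValueNear μ f c' x) : c = c' := by
  obtain ⟨u, hu, hfu⟩ := h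
  obtain ⟨u', hu', hfu'⟩ := h'
  have : (ae (μ.restrict (u ∩ u'))).NeBot := by
    rw [ae_neBot, Ne, Measure.restrict_eq_zero]
    exact (μ.measure_pos_of_mem_nhds (inter_mem hu hu')).ne'
  obtain ⟨y, hy, hy'⟩ := ((ae_restrict_of_ae_restrict_of_subset inter_subset_left hfu).and
    (ae_restrict_of_ae_restrict_of_subset inter_subset_right hfu')).exists
  exact hy.symm.trans hy'

theorem indicator_hasAEValueNear_one_eq [μ.IsOpenPosMeasure] {f : α → ℝ} {c : ℝ} {x : α}
    (h : HasAEValueNear μ f c x) (hc : c = 0 ∨ c = 1) :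
    {y | HasAEValueNear μ f 1 y}.indicator 1 x = c := by
  rcases hc with rfl | rfl
  · exact indicator_of_notMem (fun h1 ↦ zero_ne_one (h.unique h1)) 1
  · exact indicator_of_mem (s := {y | HasAEValueNear μ f 1 y}) h 1

end Local

theorem theta_of_finite_transition_set_general (A B : ℝ) (θ : ℝ → ℝ)
    (hint : IntegrableOn θ (Ioo A B))
    (hrange : ∀ x ∈ Ioo A B, θ x ∈ Icc (0:ℝ) 1)
    (X : Set ℝ)
    (hX : X = {x ∈ Ioo A B | ∃ δ₀ > (0:ℝ), ∀ δ ∈ Ioo (0:ℝ) δ₀,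
      (∫ s in Ioo A B ∩ Metric.ball x δ, θ s)
          / (volume (Ioo A B ∩ Metric.ball x δ)).toReal ∈ Ioo (0:ℝ) 1})
    (hXfin : X.Finite) :
    ∃ v : ℝ → ℝ,
      (∀ᵐ x ∂(volume.restrict (Ioo A B)), θ x = v x) ∧
      (∀ x ∈ Ioo A B, v x = 0 ∨ v x = 1) ∧
      (∀ x ∈ Ioo A B, x ∉ X → ∃ δ > 0, ∀ y ∈ Ioo A B, |y - x| < δ → v y = v x) := by
  have hloc : ∀ x ∈ Ioo A B \ X, ∃ δ > 0, ∃ c : ℝ, (c = 0 ∨ c = 1) ∧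
      ∀ᵐ y ∂volume.restrict (Ioo A B ∩ Metric.ball x δ), θ y = c := fun x ⟨hxJ, hxX⟩ ↦
    exists_ae_restrict_inter_ball_eq_zero_or_one measurableSet_Ioo measure_Ioo_lt_top.ne hint
      hrange fun h ↦ hxX (hX ▸ ⟨hxJ, h⟩)
  choose! δ hδ c hc hae using hloc
  set v : ℝ → ℝ := {y | HasAEValueNear volume θ 1 y}.indicator 1
  have hv : ∀ x ∈ Ioo A B \ X, ∀ y ∈ Ioo A B ∩ Metric.ball x (δ x), v y = c x :=
    fun x hx y hy ↦ indicator_hasAEValueNear_one_eq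
      ⟨_, (isOpen_Ioo.inter Metric.isOpen_ball).mem_nhds hy, hae x hx⟩ (hc x hx)
  refine ⟨v, ?_, fun x _ ↦ ?_, fun x hxJ hxX ↦ ⟨δ x, hδ x ⟨hxJ, hxX⟩, fun y hyJ hyx ↦ ?_⟩⟩
  · rw [ae_restrict_iff' measurableSet_Ioo]
    have hXnull : ∀ᵐ y, y ∉ X := measure_eq_zero_iff_ae_notMem.1 (hXfin.measure_zero _)
    have hJX : ∀ᵐ y, y ∈ Ioo A B \ X → θ y = v y :=
      ae_imp_of_forall_exists_nhds_ae_restrict fun x hx ↦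
        ⟨_, (isOpen_Ioo.inter Metric.isOpen_ball).mem_nhds ⟨hx.1, Metric.mem_ball_self (hδ x hx)⟩,
          by filter_upwards [hae x hx, ae_restrict_mem (measurableSet_Ioo.inter measurableSet_ball)]
               with y hθ hy using hθ.trans (hv x hx y hy).symm⟩
    filter_upwards [hXnull, hJX] with y hyX hy hyJ using hy ⟨hyJ, hyX⟩
  · exact indicator_eq_zero_or_self _ _ _
  · have hx : x ∈ Ioo A B \ X := ⟨hxJ, hxX⟩
    exact (hv x hx y ⟨hyJ, by rwa [Metric.mem_ball, Real.dist_eq]⟩).trans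
      (hv x hx x ⟨hxJ, Metric.mem_ball_self (hδ x hx)⟩).symm

/-- **Lemma 4.4.**
Let `J = (A,B)` be a bounded open interval and `θ ∈ L¹(J;[0,1])`.  If the set `X` of
points `x ∈ J` at which the averages of `θ` over `J ∩ B(x,δ)` lie in `(0,1)` for all
small `δ > 0` is finite, then `θ` coincides a.e. on `J` with a `BV` function with
values in `{0,1}` which is locally constant on `J` off `X` (so its jump set is
contained in `X`). -/
theorem theta_of_finite_transition_set (A B : ℝ) (hAB : A < B) (θ : ℝ → ℝ)
    (hint : IntegrableOn θ (Ioo A B))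
    (hrange : ∀ x ∈ Ioo A B, θ x ∈ Icc (0:ℝ) 1)
    (X : Set ℝ)
    (hX : X = {x ∈ Ioo A B | ∃ δ₀ > (0:ℝ), ∀ δ ∈ Ioo (0:ℝ) δ₀,
      (∫ s in Ioo A B ∩ Metric.ball x δ, θ s)
          / (volume (Ioo A B ∩ Metric.ball x δ)).toReal ∈ Ioo (0:ℝ) 1})
    (hXfin : X.Finite) :
    ∃ v : ℝ → ℝ,
      (∀ᵐ x ∂(volume.restrict (Ioo A B)), θ x = v x) ∧
      (∀ x ∈ Ioo A B, v x = 0 ∨ v x = 1) ∧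
      (∀ x ∈ Ioo A B, x ∉ X → ∃ δ > 0, ∀ y ∈ Ioo A B, |y - x| < δ → v y = v x) :=
  theta_of_finite_transition_set_general A B θ hint hrange X hX hXfin
end

section
/- Let μ, μ¹ and μ² be nonnegative finite Radon measures on ℝ^N, with μ¹ and μ² mutually singular, and suppose μ(B) ≥ μ¹(B) and μ(B) ≥ μ²(B) for every open ball B with μ(∂B) = 0. Then μ(E) ≥ μ¹(E) + μ²(E) for every Borel set E ⊂ ℝ^N. -/
/-!
All but countably many spheres around a point are null for `μ + ν`, and for such radii the closed
ball differs from the open ball by a `μ + ν`-null set; so the comparison on open balls gives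
`ν (closedBall x r) ≤ μ (closedBall x r)` for arbitrarily small `r`. The Besicovitch covering
theorem upgrades this to `ν ≤ μ`. Applying this to `μ¹` and `μ²`, which live on complementary
sets, gives `μ¹ + μ² ≤ μ`.
-/

open MeasureTheory Set Filter Topology Metric

namespace MeasureTheory.Measure

theorem MutuallySingular.add_le {α : Type*} [MeasurableSpace α] {μ ν₁ ν₂ : Measure α}
    (hsing : ν₁ ⟂ₘ ν₂) (h₁ : ν₁ ≤ μ) (h₂ : ν₂ ≤ μ) : ν₁ + ν₂ ≤ μ := by
  refine le_iff'.2 fun s => ?_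
  obtain ⟨S, hSm, hS₁, hS₂⟩ := hsing
  have hν₁ : ν₁ s = ν₁ (s \ S) := by
    rw [← measure_inter_add_sdiff s hSm, measure_mono_null inter_subset_right hS₁, zero_add]
  have hν₂ : ν₂ s = ν₂ (s ∩ S) := by
    rw [← measure_inter_add_sdiff s hSm, measure_mono_null (sdiff_subset_compl s S) hS₂, add_zero]
  calc (ν₁ + ν₂) s = ν₁ (s \ S) + ν₂ (s ∩ S) := by rw [add_apply, hν₁, hν₂]
    _ ≤ μ (s \ S) + μ (s ∩ S) := add_le_add (h₁ _) (h₂ _)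
    _ = μ s := by rw [add_comm, measure_inter_add_sdiff s hSm]

section BallComparison

variable {E : Type*} [NormedAddCommGroup E] [NormedSpace ℝ E] [MeasurableSpace E] [BorelSpace E]
  {μ ν : Measure E}

theorem frequently_closedBall_le_of_ball_le [SFinite μ] [SFinite ν]
    (h : ∀ (x : E) (r : ℝ), 0 < r →
      μ (frontier (ball x r)) = 0 → ν (ball x r) ≤ μ (ball x r)) (x : E) :
    ∃ᶠ r in 𝓝[>] 0, ν (closedBall x r) ≤ μ (closedBall x r) := by
  refine (nhdsGT_basis 0).frequently_iff.2 fun ε hε => ?_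
  obtain ⟨r, hr, hnull⟩ := exists_null_frontier_thickening (μ + ν) {x} hε
  rw [thickening_singleton, add_apply, add_eq_zero] at hnull
  refine ⟨r, hr, ?_⟩
  calc ν (closedBall x r) = ν (ball x r ∪ frontier (ball x r)) := by
        rw [← closure_eq_self_union_frontier, closure_ball x hr.1.ne']
    _ ≤ ν (ball x r) + ν (frontier (ball x r)) := measure_union_le _ _
    _ = ν (ball x r) := by rw [hnull.2, add_zero]
    _ ≤ μ (ball x r) := h x r hr.1 hnull.1
    _ ≤ μ (closedBall x r) := measure_mono ball_subset_closedBall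

theorem le_of_ball_le [FiniteDimensional ℝ E] [IsLocallyFiniteMeasure μ] [SFinite ν]
    (h : ∀ (x : E) (r : ℝ), 0 < r →
      μ (frontier (ball x r)) = 0 → ν (ball x r) ≤ μ (ball x r)) : ν ≤ μ :=
  le_iff'.2 fun s =>
    (Besicovitch.vitaliFamily ν).measure_le_of_frequently_le μ AbsolutelyContinuous.rfl s
      fun x _ => (Besicovitch.tendsto_filterAt ν x).frequently
        (frequently_closedBall_le_of_ball_le h x)

end BallComparison

end MeasureTheory.Measure

/-- **Lemma 5.6.**
Let `μ, μ¹, μ²` be nonnegative finite (Radon) measures on `ℝ^N`, with `μ¹` and `μ²`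
mutually singular, and suppose that `μ(B) ≥ μ¹(B)` and `μ(B) ≥ μ²(B)` for every open
ball `B` with `μ(∂B) = 0`.  Then `μ(E) ≥ μ¹(E) + μ²(E)` for every Borel set `E`. -/
theorem measure_additive_lower_bound {N : ℕ}
    (μ μ1 μ2 : Measure (EuclideanSpace ℝ (Fin N)))
    [IsFiniteMeasure μ] [IsFiniteMeasure μ1] [IsFiniteMeasure μ2]
    (hsing : μ1 ⟂ₘ μ2)
    (h1 : ∀ (x : EuclideanSpace ℝ (Fin N)) (r : ℝ), 0 < r →
      μ (frontier (Metric.ball x r)) = 0 → μ1 (Metric.ball x r) ≤ μ (Metric.ball x r))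
    (h2 : ∀ (x : EuclideanSpace ℝ (Fin N)) (r : ℝ), 0 < r →
      μ (frontier (Metric.ball x r)) = 0 → μ2 (Metric.ball x r) ≤ μ (Metric.ball x r)) :
    ∀ E : Set (EuclideanSpace ℝ (Fin N)), MeasurableSet E → μ1 E + μ2 E ≤ μ E :=
  fun E _ => hsing.add_le (Measure.le_of_ball_le h1) (Measure.le_of_ball_le h2) E
end
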